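/- Let p be a prime with p > n, and let G be a graph on vertex set {1,...,n}. The number of vectors v ∈ (Z/p)^n such that v_i ≠ v_j for all 1 ≤ i < j ≤ n and v_1 - v_j ≠ i for all ij ∈ G (i < j) equals p · Σ_{k=0}^{n-1} (-1)^k · Stir(G, n-k) · (p-k-1)!/(p-n)!. -/

import Mathlib

open Finset Nat

/-- `i` and `j` lie in the same block of the set partition `P`. -/
def sameBlock {n : ℕ} (P : Finpartition (univ : Finset (Fin n))) (i j : Fin n) : Prop :=
  ∃ B ∈ P.parts, i ∈ B ∧ j ∈ B

/-- `(i,j)` is an arc of the arc diagram of `P`: `i < j` lie in the same block and no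
element strictly between them lies in that block. -/
def IsArc {n : ℕ} (P : Finpartition (univ : Finset (Fin n))) (i j : Fin n) : Prop :=
  i < j ∧ sameBlock P i j ∧ ∀ l : Fin n, i < l → l < j → ¬ sameBlock P i l

/-- A set partition is nonnesting if no arc nests strictly inside another. -/
def Nonnesting {n : ℕ} (P : Finpartition (univ : Finset (Fin n))) : Prop :=
  ¬ ∃ i j k l : Fin n, IsArc P i j ∧ IsArc P k l ∧ i < k ∧ k < l ∧ l < j

/-- The number of connected components of a set partition of {1,...,n}:
one more than the number of positions `1 ≤ m < n` at which the partition splits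
into an initial segment and a final segment. -/
def numComponents {n : ℕ} (P : Finpartition (univ : Finset (Fin n))) : ℕ :=
  1 + ((Finset.Ico 1 n).filter
    (fun m => ∀ B ∈ P.parts, (∀ x ∈ B, (x : ℕ) < m) ∨ (∀ x ∈ B, m ≤ (x : ℕ)))).card

/-- `Stir G m`: the number of set partitions of {1,...,n} with `m` blocks all of
whose arcs are edges of `G`. -/
noncomputable def StirG (n : ℕ) (G : Finset (Fin n × Fin n)) (m : ℕ) : ℕ :=
  Nat.card {P : Finpartition (univ : Finset (Fin n)) //
    P.parts.card = m ∧ ∀ i j : Fin n, IsArc P i j → (i, j) ∈ G}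

/-!
By inclusion–exclusion over the forbidden equations, the count is `∑_{T ⊆ G} (-1)^|T| N(T)`, where
`N(T)` counts the injective `v` with `v₁ - v_j = i` for every `ij ∈ T`. Such a `v` forces `T` to be
a matching (no two arcs of `T` share an end); then `v₁` is free, each head `j` of `T` gets the
value `v₁ - i`, and the other `n - 1 - |T|` coordinates take distinct values among the
`p - 1 - |T|` unused ones, so `N(T) = p (p - |T| - 1)! / (p - n)!`. Finally, the matchings `T ⊆ G`
with `k` arcs are exactly the arc sets of the `G`-partitions with `n - k` blocks: a partition is
recovered from its arcs as their connected components, and a block with `b` elements has `b - 1`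
arcs.
-/

open Function

theorem injective_iff_lt_imp_ne {α β : Type*} [LinearOrder α] {f : α → β} :
    Injective f ↔ ∀ x y, x < y → f x ≠ f y :=
  ⟨fun hf _ _ hxy => hf.ne hxy.ne, Injective.of_lt_imp_ne⟩

section InjectiveExtension

variable {α β : Type*} [DecidableEq α] [DecidableEq β]

def injectiveEqOnEquiv (D : Finset α) (f : α → β) (hf : Set.InjOn f D) :
    {g : α → β // Injective g ∧ Set.EqOn g f D} ≃ ({x // x ∉ D} ↪ {y // y ∉ D.image f}) where
  toFun g := ⟨fun x => ⟨g.1 x, fun hx => by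
      obtain ⟨d, hd, hgd⟩ := mem_image.1 hx
      exact x.2 (g.2.1 (g.2.2 hd ▸ hgd) ▸ hd)⟩,
    fun x y hxy => Subtype.ext (g.2.1 (congrArg Subtype.val hxy))⟩
  invFun h := ⟨fun x => if hx : x ∈ D then f x else h ⟨x, hx⟩, by
      intro x y hxy
      by_cases hx : x ∈ D <;> by_cases hy : y ∈ D <;>
        simp only [hx, hy, dite_true, dite_false] at hxy
      · exact hf hx hy hxy
      · exact absurd (hxy ▸ mem_image_of_mem f hx) (h ⟨y, hy⟩).2
      · exact absurd (hxy ▸ mem_image_of_mem f hy) (h ⟨x, hx⟩).2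
      · simpa using h.injective (Subtype.ext hxy),
    fun x hx => dif_pos hx⟩
  left_inv g := by
    ext x
    by_cases hx : x ∈ D
    · simp [hx, g.2.2 hx]
    · simp [hx]
      rfl
  right_inv h := by
    ext x
    simp [x.2]

theorem card_injective_eqOn [Fintype α] [Fintype β] (D : Finset α) (f : α → β)
    (hf : Set.InjOn f D) :
    Nat.card {g : α → β // Injective g ∧ Set.EqOn g f D} =
      (Fintype.card β - #D).descFactorial (Fintype.card α - #D) := by
  rw [Nat.card_congr (injectiveEqOnEquiv D f hf), Nat.card_eq_fintype_card,
    Fintype.card_embedding_eq, Fintype.card_subtype_compl, Fintype.card_subtype_compl,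
    Fintype.card_coe, Fintype.card_coe, Finset.card_image_of_injOn hf]

end InjectiveExtension

namespace Finpartition

variable {α : Type*} [DecidableEq α] {s : Finset α}

theorem parts_eq_image_part (P : Finpartition s) : P.parts = s.image P.part := by
  ext B
  refine ⟨fun hB => ?_, fun hB => ?_⟩
  · obtain ⟨a, ha⟩ := P.nonempty_of_mem_parts hB
    exact mem_image.2 ⟨a, P.le hB ha, P.part_eq_of_mem hB ha⟩
  · obtain ⟨a, ha, rfl⟩ := mem_image.1 hB
    exact P.part_mem.2 ha

theorem ext_of_part_eq {P Q : Finpartition s} (h : ∀ a ∈ s, P.part a = Q.part a) : P = Q := by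
  ext1
  rw [parts_eq_image_part, parts_eq_image_part, image_congr h]

end Finpartition

section Blocks

variable {n : ℕ} {P Q : Finpartition (univ : Finset (Fin n))}

theorem sameBlock_iff_mem_part {i j : Fin n} : sameBlock P i j ↔ j ∈ P.part i := by
  rw [Finpartition.mem_part_iff_exists, sameBlock]
  exact exists_congr fun B => and_congr_right' and_comm

theorem sameBlock_iff_part_eq {i j : Fin n} : sameBlock P i j ↔ P.part i = P.part j := by
  rw [sameBlock_iff_mem_part, P.mem_part_iff_part_eq_part (mem_univ j) (mem_univ i), eq_comm]

theorem sameBlock_comm {i j : Fin n} : sameBlock P i j ↔ sameBlock P j i := by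
  simp only [sameBlock_iff_part_eq, eq_comm]

theorem sameBlock.trans {i j k : Fin n} (hij : sameBlock P i j) (hjk : sameBlock P j k) :
    sameBlock P i k :=
  sameBlock_iff_part_eq.2 ((sameBlock_iff_part_eq.1 hij).trans (sameBlock_iff_part_eq.1 hjk))

theorem eq_of_sameBlock_iff (h : ∀ i j, sameBlock P i j ↔ sameBlock Q i j) : P = Q :=
  Finpartition.ext_of_part_eq fun i _ => Finset.ext fun j => by
    simpa only [sameBlock_iff_mem_part] using h i j

theorem exists_isArc_le {i l : Fin n} (h : sameBlock P i l) (hil : i < l) :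
    ∃ j, IsArc P i j ∧ j ≤ l := by
  set T := (P.part i).filter (i < ·)
  have hl : l ∈ T := mem_filter.2 ⟨sameBlock_iff_mem_part.1 h, hil⟩
  obtain ⟨hjT, hij⟩ := mem_filter.1 (T.min'_mem ⟨l, hl⟩)
  refine ⟨T.min' ⟨l, hl⟩, ⟨hij, sameBlock_iff_mem_part.2 hjT, fun m him hmj hm => ?_⟩,
    T.min'_le l hl⟩
  exact hmj.not_ge (T.min'_le m (mem_filter.2 ⟨sameBlock_iff_mem_part.1 hm, him⟩))

end Blocks

section Matching

variable {n : ℕ}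

structure IsMatching (S : Finset (Fin n × Fin n)) : Prop where
  lt : ∀ e ∈ S, e.1 < e.2
  injOn_fst : Set.InjOn Prod.fst (S : Set (Fin n × Fin n))
  injOn_snd : Set.InjOn Prod.snd (S : Set (Fin n × Fin n))

def Reach (S : Finset (Fin n × Fin n)) : Fin n → Fin n → Prop :=
  Relation.ReflTransGen fun a b => (a, b) ∈ S

variable {S : Finset (Fin n × Fin n)}

namespace IsMatching

theorem le_of_reach (hS : IsMatching S) {a b : Fin n} (h : Reach S a b) : a ≤ b := by
  induction h with
  | refl => exact le_rfl
  | tail _ hbc ih => exact ih.trans (hS.lt _ hbc).le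

theorem reach_or_reach_of_reach_of_reach (hS : IsMatching S) {a b c : Fin n}
    (hac : Reach S a c) (hbc : Reach S b c) : Reach S a b ∨ Reach S b a := by
  induction hac using Relation.ReflTransGen.head_induction_on with
  | refl => exact Or.inr hbc
  | @head x y hxy _ ih =>
    rcases ih with h | h
    · exact Or.inl (h.head hxy)
    · rcases Relation.ReflTransGen.cases_tail h with rfl | ⟨b', hbb', hb'y⟩
      · exact Or.inl (.single hxy)
      · obtain rfl : x = b' := congrArg Prod.fst (hS.injOn_snd hxy hb'y rfl)
        exact Or.inr hbb'

theorem equivalence_join_reach (hS : IsMatching S) : Equivalence (Relation.Join (Reach S)) :=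
  Relation.equivalence_join_reflTransGen fun _ b c hab hac => by
    obtain rfl : b = c := congrArg Prod.snd (hS.injOn_fst hab hac rfl)
    exact ⟨b, .refl, .refl⟩

theorem reach_of_join (hS : IsMatching S) {i j : Fin n} (h : Relation.Join (Reach S) i j)
    (hij : i ≤ j) : Reach S i j := by
  obtain ⟨c, hic, hjc⟩ := h
  rcases hS.reach_or_reach_of_reach_of_reach hic hjc with hij' | hji
  · exact hij'
  · obtain rfl := le_antisymm hij (hS.le_of_reach hji)
    exact .refl

end IsMatching

open Classical in
noncomputable def ofMatching (S : Finset (Fin n × Fin n)) (hS : IsMatching S) :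
    Finpartition (univ : Finset (Fin n)) :=
  Finpartition.ofSetoid ⟨_, hS.equivalence_join_reach⟩

open Classical in
theorem sameBlock_ofMatching_iff (hS : IsMatching S) {i j : Fin n} :
    sameBlock (ofMatching S hS) i j ↔ Relation.Join (Reach S) i j := by
  rw [sameBlock_iff_mem_part, ofMatching, Finpartition.mem_part_ofSetoid_iff_rel]
  rfl

theorem isArc_ofMatching_iff (hS : IsMatching S) {i j : Fin n} :
    IsArc (ofMatching S hS) i j ↔ (i, j) ∈ S := by
  simp only [IsArc, sameBlock_ofMatching_iff]
  constructor
  · rintro ⟨hij, hjoin, hgap⟩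
    obtain ⟨b, hib, hbj⟩ := Relation.ReflTransGen.cases_head (hS.reach_of_join hjoin hij.le)
      |>.resolve_left hij.ne
    obtain rfl | hbj' := (hS.le_of_reach hbj).eq_or_lt
    · exact hib
    · exact absurd ⟨b, .single hib, .refl⟩ (hgap b (hS.lt _ hib) hbj')
  · intro hij
    refine ⟨hS.lt _ hij, ⟨j, .single hij, .refl⟩, fun l hil hlj hjoin => ?_⟩
    obtain ⟨b, hib, hbl⟩ := Relation.ReflTransGen.cases_head (hS.reach_of_join hjoin hil.le)
      |>.resolve_left hil.ne
    obtain rfl : j = b := congrArg Prod.snd (hS.injOn_fst hij hib rfl)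
    exact hlj.not_ge (hS.le_of_reach hbl)

end Matching

section Arcs

variable {n : ℕ} {P : Finpartition (univ : Finset (Fin n))}

open Classical in
noncomputable def arcs (P : Finpartition (univ : Finset (Fin n))) : Finset (Fin n × Fin n) :=
  univ.filter fun e => IsArc P e.1 e.2

theorem mem_arcs {e : Fin n × Fin n} : e ∈ arcs P ↔ IsArc P e.1 e.2 := by
  simp [arcs]

theorem isMatching_arcs (P : Finpartition (univ : Finset (Fin n))) : IsMatching (arcs P) where
  lt e he := (mem_arcs.1 he).1
  injOn_fst e he f hf hef := by
    obtain ⟨he₁, he₂, he₃⟩ := mem_arcs.1 he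
    obtain ⟨hf₁, hf₂, hf₃⟩ := mem_arcs.1 hf
    refine Prod.ext hef ?_
    rcases lt_trichotomy e.2 f.2 with h | h | h
    · exact absurd he₂ (hef ▸ hf₃ e.2 (hef ▸ he₁) h)
    · exact h
    · exact absurd hf₂ (hef ▸ he₃ f.2 (hef ▸ hf₁) h)
  injOn_snd e he f hf hef := by
    obtain ⟨he₁, he₂, he₃⟩ := mem_arcs.1 he
    obtain ⟨hf₁, hf₂, hf₃⟩ := mem_arcs.1 hf
    refine Prod.ext ?_ hef
    rcases lt_trichotomy e.1 f.1 with h | h | h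
    · exact absurd (he₂.trans (hef ▸ sameBlock_comm.1 hf₂)) (he₃ f.1 h (hef ▸ hf₁))
    · exact h
    · exact absurd (hf₂.trans (hef ▸ sameBlock_comm.1 he₂)) (hf₃ e.1 h (hef ▸ he₁))

theorem sameBlock_of_reach_arcs {i j : Fin n} (h : Reach (arcs P) i j) : sameBlock P i j := by
  induction h with
  | refl => exact sameBlock_iff_part_eq.2 rfl
  | tail _ hbc ih => exact ih.trans (mem_arcs.1 hbc).2.1

theorem reach_arcs_of_sameBlock {i j : Fin n} (h : sameBlock P i j) (hij : i ≤ j) :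
    Reach (arcs P) i j := by
  induction hd : (j : ℕ) - i using Nat.strong_induction_on generalizing i with
  | _ d ih =>
    obtain rfl | hij := hij.eq_or_lt
    · exact .refl
    obtain ⟨k, hik, hkj⟩ := exists_isArc_le h hij
    have hkj' : sameBlock P k j := (sameBlock_comm.1 hik.2.1).trans h
    have hd' : (j : ℕ) - k < d := by have : (i : ℕ) < k := hik.1; omega
    exact .head (mem_arcs.2 hik) (ih _ hd' hkj' hkj rfl)

theorem ofMatching_arcs (P : Finpartition (univ : Finset (Fin n))) :
    ofMatching (arcs P) (isMatching_arcs P) = P := by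
  refine eq_of_sameBlock_iff fun i j => ?_
  rw [sameBlock_ofMatching_iff]
  refine ⟨fun ⟨c, hic, hjc⟩ => (sameBlock_of_reach_arcs hic).trans
    (sameBlock_comm.1 (sameBlock_of_reach_arcs hjc)), fun h => ?_⟩
  rcases le_total i j with hij | hji
  · exact ⟨j, reach_arcs_of_sameBlock h hij, .refl⟩
  · exact ⟨i, .refl, reach_arcs_of_sameBlock (sameBlock_comm.1 h) hji⟩

theorem arcs_ofMatching {S : Finset (Fin n × Fin n)} (hS : IsMatching S) :
    arcs (ofMatching S hS) = S := by
  ext e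
  rw [mem_arcs, isArc_ofMatching_iff]

/-- Every element is either the left end of an arc or the largest element of its block. -/
theorem card_arcs_add_card_parts (P : Finpartition (univ : Finset (Fin n))) :
    #(arcs P) + #P.parts = n := by
  classical
  set L := (arcs P).image Prod.fst
  have hL : #(arcs P) = #L := (Finset.card_image_of_injOn (isMatching_arcs P).injOn_fst).symm
  have hLc : #Lᶜ = #P.parts := by
    refine card_bij' (fun a _ => P.part a) (fun B hB => B.max' (P.nonempty_of_mem_parts hB))
      (fun a _ => P.part_mem.2 (mem_univ a)) (fun B hB => ?_) (fun a ha => ?_)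
      (fun B hB => P.part_eq_of_mem hB (max'_mem _ _))
    · refine mem_compl.2 fun hmax => ?_
      obtain ⟨e, he, hemax⟩ := mem_image.1 hmax
      obtain ⟨hlt, hsame, -⟩ := mem_arcs.1 he
      have : e.2 ∈ B := by
        rw [← P.part_eq_of_mem hB (hemax ▸ max'_mem _ _)]
        exact sameBlock_iff_mem_part.1 hsame
      exact (hemax ▸ hlt).not_ge (le_max' _ _ this)
    · refine ((P.part a).le_max' a (P.mem_part (mem_univ a))).antisymm' (not_lt.1 fun hlt => ?_)
      obtain ⟨j, hj, -⟩ := exists_isArc_le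
        (sameBlock_iff_mem_part.2 ((P.part a).max'_mem (P.part_nonempty.2 (mem_univ a)))) hlt
      exact mem_compl.1 ha (mem_image.2 ⟨(a, j), mem_arcs.2 hj, rfl⟩)
  rw [hL, ← hLc, card_add_card_compl, Fintype.card_fin]

open Classical in
theorem card_matchings_eq_stirG (G : Finset (Fin n × Fin n)) {k : ℕ} (hk : k ≤ n) :
    #{S ∈ G.powerset | IsMatching S ∧ #S = k} = StirG n G (n - k) := by
  rw [StirG, ← Nat.card_eq_finsetCard]
  refine Nat.card_congr
    { toFun := fun S => ⟨ofMatching S.1 (mem_filter.1 S.2).2.1, ?_, ?_⟩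
      invFun := fun P => ⟨arcs P.1, mem_filter.2 ⟨?_, isMatching_arcs P.1, ?_⟩⟩
      left_inv := fun S => Subtype.ext (arcs_ofMatching (mem_filter.1 S.2).2.1)
      right_inv := fun P => Subtype.ext (ofMatching_arcs P.1) }
  · obtain ⟨S, hS⟩ := S
    obtain ⟨-, hSm, hSk⟩ := mem_filter.1 hS
    have := card_arcs_add_card_parts (ofMatching S hSm)
    rw [arcs_ofMatching] at this
    change #(ofMatching S hSm).parts = n - k
    omega
  · obtain ⟨S, hS⟩ := S
    obtain ⟨hSG, hSm, -⟩ := mem_filter.1 hS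
    exact fun i j hij => mem_powerset.1 hSG ((isArc_ofMatching_iff hSm).1 hij)
  · exact mem_powerset.2 fun e he => P.2.2 e.1 e.2 (mem_arcs.1 he)
  · have := card_arcs_add_card_parts P.1
    rw [P.2.1] at this
    omega

end Arcs

section Solutions

variable {n p : ℕ}

/-- The index `i : Fin n` is the vertex labelled `i + 1` in the statement. -/
abbrev label (p : ℕ) (i : Fin n) : ZMod p := (((i : ℕ) + 1 : ℕ) : ZMod p)

theorem val_label (hpn : n < p) (i : Fin n) : (label p i).val = i + 1 :=
  ZMod.val_cast_of_lt (by omega)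

theorem label_injective (hpn : n < p) : Injective (label (n := n) p) := fun i j h => by
  have := congrArg ZMod.val h
  rw [val_label hpn, val_label hpn] at this
  exact Fin.ext (by omega)

theorem label_ne_zero (hpn : n < p) (i : Fin n) : label p i ≠ 0 := fun h => by
  have := congrArg ZMod.val h
  rw [val_label hpn, ZMod.val_zero] at this
  omega

def IsSolution (hn : 0 < n) (S : Finset (Fin n × Fin n)) (v : Fin n → ZMod p) : Prop :=
  Injective v ∧ ∀ e ∈ S, v ⟨0, hn⟩ - v e.2 = label p e.1

theorem card_avoiding_eq_sum [NeZero p] (hn : 0 < n) (G : Finset (Fin n × Fin n)) :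
    (Nat.card {v : Fin n → ZMod p // Injective v ∧ ∀ e ∈ G, v ⟨0, hn⟩ - v e.2 ≠ label p e.1} :
      ℤ) = ∑ T ∈ G.powerset, (-1) ^ #T * (Nat.card {v // IsSolution (p := p) hn T v} : ℤ) := by
  classical
  set bad : Fin n × Fin n → Finset (Fin n → ZMod p) :=
    fun e => {v | v ⟨0, hn⟩ - v e.2 = label p e.1}
  have h := inclusion_exclusion_sum_inf_compl G bad fun v => if Injective v then (1 : ℤ) else 0
  simp only [sum_boole, smul_eq_mul] at h
  have hG : ({v | Injective v ∧ ∀ e ∈ G, v ⟨0, hn⟩ - v e.2 ≠ label p e.1} : Finset _) =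
      (G.inf fun e => (bad e)ᶜ).filter Injective := by
    ext v
    simp [bad, mem_inf, and_comm]
  have hT (T : Finset (Fin n × Fin n)) :
      ({v | IsSolution hn T v} : Finset _) = (T.inf bad).filter Injective := by
    ext v
    simp [bad, mem_inf, IsSolution, and_comm]
  simp only [Nat.card_eq_fintype_card, Fintype.card_subtype, hG, h, hT]

variable {hn : 0 < n} {S : Finset (Fin n × Fin n)}

theorem IsSolution.isMatching (hpn : n < p) {v : Fin n → ZMod p} (hv : IsSolution hn S v)
    (hS : ∀ e ∈ S, e.1 < e.2) : IsMatching S where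
  lt := hS
  injOn_fst e he f hf hef := Prod.ext hef <| hv.1 <|
    sub_right_inj.1 ((hv.2 e he).trans (hef ▸ (hv.2 f hf).symm))
  injOn_snd e he f hf hef := Prod.ext (label_injective hpn <| by
    rw [← hv.2 e he, ← hv.2 f hf, hef]) hef

def pinned (hn : 0 < n) (S : Finset (Fin n × Fin n)) : Finset (Fin n) :=
  insert ⟨0, hn⟩ (S.image Prod.snd)

/-- For a matching `S` the sum has at most one term: this is `-(i + 1)` at the head `j` of an arc
`(i, j)` of `S`, and `0` at the other points. -/
def pinnedValue (p : ℕ) (S : Finset (Fin n × Fin n)) (m : Fin n) : ZMod p :=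
  -∑ e ∈ S with e.2 = m, label p e.1

theorem pinnedValue_snd (hS : IsMatching S) {e : Fin n × Fin n} (he : e ∈ S) :
    pinnedValue p S e.2 = -label p e.1 := by
  refine congrArg Neg.neg (sum_eq_single_of_mem e (mem_filter.2 ⟨he, rfl⟩) fun f hf hfe => ?_)
  exact absurd (hS.injOn_snd (mem_filter.1 hf).1 he (mem_filter.1 hf).2) hfe

theorem pinnedValue_zero (hS : IsMatching S) : pinnedValue p S ⟨0, hn⟩ = 0 := by
  rw [pinnedValue, neg_eq_zero]
  refine sum_eq_zero fun e he => absurd (hS.lt e (mem_filter.1 he).1) ?_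
  rw [(mem_filter.1 he).2]
  exact Nat.not_lt_zero _

theorem eqOn_pinnedValue_iff (hS : IsMatching S) (u : Fin n → ZMod p) :
    Set.EqOn u (pinnedValue p S) ↑(pinned hn S) ↔
      u ⟨0, hn⟩ = 0 ∧ ∀ e ∈ S, u e.2 = -label p e.1 := by
  simp only [pinned, Set.EqOn, coe_insert, coe_image, Set.forall_mem_insert,
    Set.forall_mem_image, mem_coe, pinnedValue_zero hS]
  exact and_congr_right' (forall₂_congr fun e he => by rw [pinnedValue_snd hS he])

theorem injOn_pinnedValue (hpn : n < p) (hS : IsMatching S) :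
    Set.InjOn (pinnedValue p S) ↑(pinned hn S) := by
  intro x hx y hy hxy
  simp only [pinned, coe_insert, coe_image, Set.mem_insert_iff, Set.mem_image, mem_coe] at hx hy
  rcases hx with rfl | ⟨e, he, rfl⟩ <;> rcases hy with rfl | ⟨f, hf, rfl⟩
  · rfl
  · rw [pinnedValue_zero hS, pinnedValue_snd hS hf, zero_eq_neg] at hxy
    exact absurd hxy (label_ne_zero hpn _)
  · rw [pinnedValue_zero hS, pinnedValue_snd hS he, neg_eq_zero] at hxy
    exact absurd hxy (label_ne_zero hpn _)
  · rw [pinnedValue_snd hS he, pinnedValue_snd hS hf, neg_inj] at hxy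
    exact congrArg Prod.snd (hS.injOn_fst he hf (label_injective hpn hxy))

theorem card_pinned (hS : IsMatching S) : #(pinned hn S) = #S + 1 := by
  rw [pinned, card_insert_of_notMem, Finset.card_image_of_injOn hS.injOn_snd]
  intro h
  obtain ⟨e, he, he0⟩ := mem_image.1 h
  exact Nat.not_lt_zero _ (he0 ▸ hS.lt e he)

def solutionEquiv (hS : IsMatching S) :
    {v // IsSolution (p := p) hn S v} ≃
      ZMod p × {u // Injective u ∧ Set.EqOn u (pinnedValue p S) ↑(pinned hn S)} where
  toFun v := (v.1 ⟨0, hn⟩, ⟨fun m => v.1 m - v.1 ⟨0, hn⟩, fun i j h => v.2.1 (by simpa using h),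
    (eqOn_pinnedValue_iff hS _).2 ⟨sub_self _, fun e he => by
      rw [← v.2.2 e he]; ring⟩⟩)
  invFun x := ⟨fun m => x.2.1 m + x.1, fun i j h => x.2.2.1 (by simpa using h), fun e he => by
    obtain ⟨h0, hS⟩ := (eqOn_pinnedValue_iff hS _).1 x.2.2.2
    simp only [add_sub_add_right_eq_sub, h0, hS e he, zero_sub, neg_neg]⟩
  left_inv v := by ext; simp
  right_inv x := by
    have h0 := ((eqOn_pinnedValue_iff hS _).1 x.2.2.2).1
    ext <;> simp [h0]

theorem card_solutions (hpn : n < p) (hS : IsMatching S) :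
    Nat.card {v // IsSolution (p := p) hn S v} =
      p * (p - (#S + 1)).descFactorial (n - (#S + 1)) := by
  have : NeZero p := ⟨by omega⟩
  rw [Nat.card_congr (solutionEquiv hS), Nat.card_prod, Nat.card_zmod,
    card_injective_eqOn _ _ (injOn_pinnedValue hpn hS), card_pinned hS, ZMod.card,
    Fintype.card_fin]

theorem IsMatching.card_lt (hn : 0 < n) (hS : IsMatching S) : #S < n := by
  have := card_le_univ (pinned hn S)
  rw [card_pinned hS, Fintype.card_fin] at this
  omega

theorem sum_powerset_card_solutions (hpn : n < p) (hn : 0 < n) {G : Finset (Fin n × Fin n)}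
    (hG : ∀ e ∈ G, e.1 < e.2) :
    ∑ T ∈ G.powerset, (-1) ^ #T * (Nat.card {v // IsSolution (p := p) hn T v} : ℤ) =
      ∑ k ∈ range n, (-1 : ℤ) ^ k * StirG n G (n - k) *
        (p * (p - (k + 1)).descFactorial (n - (k + 1)) : ℕ) := by
  classical
  have hcard (T) (hT : T ∈ G.powerset) : (Nat.card {v // IsSolution (p := p) hn T v} : ℤ) =
      if IsMatching T then ((p * (p - (#T + 1)).descFactorial (n - (#T + 1)) : ℕ) : ℤ) else 0 := by
    split_ifs with hm
    · rw [card_solutions hpn hm]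
    · have : IsEmpty {v // IsSolution (p := p) hn T v} :=
        ⟨fun v => hm (v.2.isMatching hpn fun e he => hG e (mem_powerset.1 hT he))⟩
      simp
  have hmaps : ∀ T ∈ G.powerset.filter IsMatching, #T ∈ range n :=
    fun T hT => mem_range.2 ((mem_filter.1 hT).2.card_lt hn)
  rw [sum_congr rfl fun T hT => by rw [hcard T hT, mul_ite, mul_zero], ← sum_filter,
    ← sum_fiberwise_of_maps_to hmaps]
  refine sum_congr rfl fun k hk => ?_
  rw [sum_congr rfl fun T hT => by rw [(mem_filter.1 hT).2], sum_const, filter_filter,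
    card_matchings_eq_stirG G (mem_range.1 hk).le, nsmul_eq_mul]
  ring

end Solutions

theorem descFactorial_sub_succ {n p k : ℕ} (hnp : n ≤ p) (hk : k < n) :
    (p - (k + 1)).descFactorial (n - (k + 1)) = (p - k - 1)! / (p - n)! := by
  rw [descFactorial_eq_div (by omega), show p - (k + 1) - (n - (k + 1)) = p - n by omega,
    Nat.sub_sub]

theorem stmt7_general (n p : ℕ) (hn : 0 < n) (hpn : n < p)
    (G : Finset (Fin n × Fin n)) (hG : ∀ e ∈ G, e.1 < e.2) :
    (Nat.card {v : Fin n → ZMod p // (∀ i j : Fin n, i < j → v i ≠ v j) ∧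
        ∀ e ∈ G, v ⟨0, hn⟩ - v e.2 ≠ (((e.1 : ℕ) + 1 : ℕ) : ZMod p)} : ℤ) =
      (p : ℤ) * ∑ k ∈ range n,
        (-1 : ℤ) ^ k * StirG n G (n - k) * (((p - k - 1)! / (p - n)! : ℕ) : ℤ) := by
  have : NeZero p := ⟨by omega⟩
  simp only [← injective_iff_lt_imp_ne]
  rw [card_avoiding_eq_sum hn G, sum_powerset_card_solutions hpn hn hG, mul_sum]
  refine sum_congr rfl fun k hk => ?_
  rw [descFactorial_sub_succ hpn.le (mem_range.1 hk), Nat.cast_mul]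
  ring

/-- for a prime p > n, the number of v ∈ (ℤ/p)ⁿ with pairwise distinct
coordinates and v₁ - vⱼ ≠ i for all edges ij ∈ G (vertices labelled 1,...,n; here
the vertex labelled r corresponds to the index r-1 of `Fin n`) equals
p·Σ_{k=0}^{n-1} (-1)^k Stir(G,n-k) (p-k-1)!/(p-n)!. -/
theorem stmt7 (n p : ℕ) (hn : 0 < n) (hp : p.Prime) (hpn : n < p)
    (G : Finset (Fin n × Fin n)) (hG : ∀ e ∈ G, e.1 < e.2) :
    (Nat.card {v : Fin n → ZMod p // (∀ i j : Fin n, i < j → v i ≠ v j) ∧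
        ∀ e ∈ G, v ⟨0, hn⟩ - v e.2 ≠ (((e.1 : ℕ) + 1 : ℕ) : ZMod p)} : ℤ) =
      (p : ℤ) * ∑ k ∈ range n,
        (-1 : ℤ) ^ k * StirG n G (n - k) * (((p - k - 1)! / (p - n)! : ℕ) : ℤ) :=
  stmt7_general n p hn hpn G hG
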